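/- arXiv:math/0007105 — 3 statements merged into one kernel-verified Lean document; each statement's English description precedes it below -/
import Mathlib

section
/- Let A be an associative unital ℂ-algebra which, as a module over its center Z(A), is generated by finitely many elements a₁,...,a_m. Then every irreducible representation of A (on a ℂ-vector space, with central elements acting as scalars) is finite-dimensional, of dimension at most m. -/
/-!
Pick any nonzero `v ∈ V`. Its orbit `{T x v | x ∈ A}` is an invariant subspace containing `v`, so by
irreducibility it is all of `V`. Writing `x = ∑ zᵢ aᵢ` with central `zᵢ`, and using that each `T zᵢ`
is a scalar, shows `T x v ∈ span {T a₁ v, …, T aₘ v}`; hence these `m` vectors span `V`.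
-/

open Submodule

section CyclicSubmodule

variable {R A V : Type*} [CommSemiring R] [Semiring A] [Algebra R A]
  [AddCommMonoid V] [Module R V] (T : A →ₐ[R] Module.End R V)

def cyclicSubmodule (v : V) : Submodule R V :=
  LinearMap.range (LinearMap.applyₗ v ∘ₗ T.toLinearMap)

variable {T}

lemma mem_cyclicSubmodule {v w : V} : w ∈ cyclicSubmodule T v ↔ ∃ x, T x v = w := by
  simp [cyclicSubmodule]

lemma self_mem_cyclicSubmodule (v : V) : v ∈ cyclicSubmodule T v :=
  mem_cyclicSubmodule.2 ⟨1, by simp⟩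

lemma apply_mem_cyclicSubmodule (y : A) {v w : V} (hw : w ∈ cyclicSubmodule T v) :
    T y w ∈ cyclicSubmodule T v := by
  obtain ⟨x, rfl⟩ := mem_cyclicSubmodule.1 hw
  exact mem_cyclicSubmodule.2 ⟨y * x, by rw [map_mul, Module.End.mul_apply]⟩

lemma cyclicSubmodule_eq_top_of_irreducible
    (hirr : ∀ U : Submodule R V, (∀ x : A, ∀ v ∈ U, T x v ∈ U) → U = ⊥ ∨ U = ⊤)
    {v : V} (hv : v ≠ 0) : cyclicSubmodule T v = ⊤ := by
  refine (hirr _ fun y _ => apply_mem_cyclicSubmodule y).resolve_left fun hbot => hv ?_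
  simpa [hbot] using self_mem_cyclicSubmodule (T := T) v

lemma apply_sum_mul_mem_span {ι : Type*} [Fintype ι] (a z : ι → A)
    (hz : ∀ i, ∃ c : R, T (z i) = c • 1) (v : V) :
    T (∑ i, z i * a i) v ∈ span R (Set.range fun i => T (a i) v) := by
  rw [map_sum, LinearMap.sum_apply]
  refine sum_mem fun i _ => ?_
  obtain ⟨c, hc⟩ := hz i
  rw [map_mul, Module.End.mul_apply, hc, LinearMap.smul_apply, Module.End.one_apply]
  exact smul_mem _ c (subset_span ⟨i, rfl⟩)

end CyclicSubmodule

/-- If the ℂ-algebra A is generated as a module over its center by m elements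
    a₁,…,a_m, then every irreducible representation of A on which central
    elements act as scalars is finite dimensional of dimension at most m. -/
theorem irreducible_rep_findim_of_finite_over_center
    {A : Type} [Ring A] [Algebra ℂ A] {m : ℕ} (a : Fin m → A)
    (hgen : ∀ x : A, ∃ z : Fin m → A,
      (∀ i, z i ∈ Subring.center A) ∧ x = ∑ i, z i * a i)
    (V : Type) [AddCommGroup V] [Module ℂ V] [Nontrivial V]
    (T : A →ₐ[ℂ] Module.End ℂ V)
    (hirr : ∀ U : Submodule ℂ V, (∀ x : A, ∀ v ∈ U, T x v ∈ U) →
      U = ⊥ ∨ U = ⊤)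
    (hschur : ∀ z ∈ Subring.center A, ∃ c : ℂ, T z = c • (1 : Module.End ℂ V)) :
    FiniteDimensional ℂ V ∧ Module.finrank ℂ V ≤ m := by
  obtain ⟨v, hv⟩ := exists_ne (0 : V)
  have hspan : span ℂ (Set.range fun i => T (a i) v) = ⊤ := by
    refine eq_top_iff'.2 fun w => ?_
    have hw : w ∈ cyclicSubmodule T v := cyclicSubmodule_eq_top_of_irreducible hirr hv ▸ mem_top
    obtain ⟨x, rfl⟩ := mem_cyclicSubmodule.1 hw
    obtain ⟨z, hz, rfl⟩ := hgen x
    exact apply_sum_mul_mem_span a z (fun i => hschur _ (hz i)) v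
  exact ⟨Module.finite_def.2 (hspan ▸ fg_span (Set.finite_range _)),
    by simpa using finrank_le_of_span_eq_top hspan⟩
end

section
/- The set D = {x ∈ ℂ : |Re x| < k/4, or Re x = −k/4 and Im x ≤ 0, or Re x = k/4 and Im x ≥ 0} has the property that for a primitive k-th root of unity q (k odd) and the function f(x) = q^x − q^{-x} (with q^x := e^{x·(2πi a)/k} for the fixed argument defining q), f is injective on D; i.e., for x, y ∈ D with x ≠ y, [x] ≠ [y]. -/
open Complex

theorem den_ne (k : ℕ) (hk3 : 3 ≤ k) :
    Complex.exp (2 * Real.pi * Complex.I / k) -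
      (Complex.exp (2 * Real.pi * Complex.I / k))⁻¹ ≠ 0 := by
  rw [← Complex.exp_neg, sub_ne_zero]
  intro h
  have h2 : Complex.exp (2 * Real.pi * Complex.I / k - -(2 * Real.pi * Complex.I / k)) = 1 := by
    rw [Complex.exp_sub, h, div_self (Complex.exp_ne_zero _)]
  rw [Complex.exp_eq_one_iff] at h2
  obtain ⟨n, hn⟩ := h2
  have hk0 : (k:ℂ) ≠ 0 := by exact_mod_cast (by omega : k ≠ 0)
  have hπI : (Real.pi : ℂ) * Complex.I ≠ 0 :=
    mul_ne_zero (by exact_mod_cast Real.pi_ne_zero) Complex.I_ne_zero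
  have h4 : (4:ℂ) * ((Real.pi:ℂ) * Complex.I) = (2*n*k) * ((Real.pi:ℂ) * Complex.I) := by
    field_simp at hn
    linear_combination (2 * (Real.pi:ℂ) * Complex.I) * hn
  have h6 : (4:ℤ) = 2*n*k := by exact_mod_cast mul_right_cancel₀ hπI h4
  have := Int.le_of_dvd (by norm_num) (⟨n, by linarith⟩ : (k:ℤ) ∣ 2)
  omega

set_option maxHeartbeats 1000000 in
/-- For k odd, k ≥ 3, and q = e^{2πi/k}, the map x ↦ [x] with
    q^x := e^{2πix/k} and [x] := (q^x − q^{-x})/(q − q⁻¹) is injective on the set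
    D = {x : |Re x| < k/4, or Re x = −k/4 and Im x ≤ 0, or Re x = k/4 and Im x ≥ 0}. -/
theorem qnum_injOn_D (k : ℕ) (hk : Odd k) (hk3 : 3 ≤ k) :
    Set.InjOn
      (fun x : ℂ =>
        (Complex.exp (2 * Real.pi * Complex.I * x / k) -
            Complex.exp (-(2 * Real.pi * Complex.I * x / k))) /
          (Complex.exp (2 * Real.pi * Complex.I / k) -
            (Complex.exp (2 * Real.pi * Complex.I / k))⁻¹))
      {x : ℂ | |x.re| < (k : ℝ) / 4 ∨
        (x.re = -((k : ℝ) / 4) ∧ x.im ≤ 0) ∨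
        (x.re = (k : ℝ) / 4 ∧ 0 ≤ x.im)} := by
  intro x hx y hy heq
  simp only at heq
  rw [div_eq_mul_inv, div_eq_mul_inv] at heq
  have hnum : Complex.exp (2 * Real.pi * Complex.I * x / k) -
            Complex.exp (-(2 * Real.pi * Complex.I * x / k)) =
            Complex.exp (2 * Real.pi * Complex.I * y / k) -
            Complex.exp (-(2 * Real.pi * Complex.I * y / k)) :=
    mul_left_injective₀ (inv_ne_zero (den_ne k hk3)) heq
  have hk0 : (k:ℂ) ≠ 0 := by exact_mod_cast (by omega : k ≠ 0)
  have hkR : (0:ℝ) < k := by positivity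
  set a : ℝ := 2*Real.pi/k with ha_def
  have hπ : (0:ℝ) < Real.pi := Real.pi_pos
  have ha : 0 < a := by positivity
  have hak : a * k = 2*Real.pi := by rw [ha_def]; field_simp [hkR.ne']
  have hsin : Complex.sin ((a : ℂ) * x) = Complex.sin ((a : ℂ) * y) := by
    have e1 : (2 * Real.pi * Complex.I * x / k : ℂ) = (a : ℂ) * x * Complex.I := by
      push_cast [ha_def]; field_simp
    have e2 : (2 * Real.pi * Complex.I * y / k : ℂ) = (a : ℂ) * y * Complex.I := by
      push_cast [ha_def]; field_simp
    rw [e1, e2] at hnum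
    simp only [Complex.sin, neg_mul]
    linear_combination (-Complex.I/2) * hnum
  rw [Complex.sin_eq_sin_iff] at hsin
  -- bounds on real parts
  have hk4 : (0:ℝ) ≤ (k:ℝ)/4 := by positivity
  have hxb : |x.re| ≤ (k:ℝ)/4 := by
    rcases hx with h | ⟨h,_⟩ | ⟨h,_⟩
    · exact le_of_lt h
    · rw [h, abs_neg, _root_.abs_of_nonneg hk4]
    · rw [h, _root_.abs_of_nonneg hk4]
  have hyb : |y.re| ≤ (k:ℝ)/4 := by
    rcases hy with h | ⟨h,_⟩ | ⟨h,_⟩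
    · exact le_of_lt h
    · rw [h, abs_neg, _root_.abs_of_nonneg hk4]
    · rw [h, _root_.abs_of_nonneg hk4]
  rw [abs_le] at hxb hyb
  clear heq hnum
  obtain ⟨n, hA | hB⟩ := hsin
  · -- y = 2nπ + x (scaled)
    rw [show (2 * (n:ℂ) * (Real.pi:ℂ)) = ((2*(n:ℝ)*Real.pi : ℝ) : ℂ) by push_cast; ring] at hA
    have hre := congrArg Complex.re hA
    have him := congrArg Complex.im hA
    simp only [Complex.add_re, Complex.add_im, Complex.ofReal_re, Complex.ofReal_im,
      Complex.re_ofReal_mul, Complex.im_ofReal_mul, zero_add] at hre him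
    have hn0 : n = 0 := by
      have h1 : 2*(n:ℝ)*Real.pi = a*(y.re - x.re) := by linarith [hre]; 
      have h2 : a * (y.re - x.re) ≤ a * ((k:ℝ)/2) :=
        mul_le_mul_of_nonneg_left (by linarith) ha.le
      have h3 : -(a * ((k:ℝ)/2)) ≤ a * (y.re - x.re) := by
        have := mul_le_mul_of_nonneg_left (by linarith : -((k:ℝ)/2) ≤ y.re - x.re) ha.le
        linarith
      have hak2 : a * ((k:ℝ)/2) = Real.pi := by linarith
      have hg1 : (-1:ℝ)*Real.pi ≤ 2*(n:ℝ)*Real.pi := by linarith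
      have hg2 : 2*(n:ℝ)*Real.pi ≤ 1*Real.pi := by linarith
      have hi1 : (-1:ℝ) ≤ 2*(n:ℝ) := le_of_mul_le_mul_right hg1 hπ
      have hi2 : 2*(n:ℝ) ≤ 1 := le_of_mul_le_mul_right hg2 hπ
      have hj1 : (-1:ℤ) ≤ 2*n := by exact_mod_cast hi1
      have hj2 : (2*n:ℤ) ≤ 1 := by exact_mod_cast hi2
      omega
    subst hn0
    simp only [Int.cast_zero, mul_zero, zero_mul] at hre
    have hre' : x.re = y.re := mul_left_cancel₀ ha.ne' (by linarith)
    have him' : x.im = y.im := mul_left_cancel₀ ha.ne' him.symm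
    exact Complex.ext hre' him'
  · -- y = (2n+1)π - x (scaled)
    rw [show ((2 * (n:ℂ) + 1) * (Real.pi:ℂ)) = (((2*(n:ℝ)+1)*Real.pi : ℝ) : ℂ) by
      push_cast; ring] at hB
    have hre := congrArg Complex.re hB
    have him := congrArg Complex.im hB
    simp only [Complex.sub_re, Complex.sub_im, Complex.ofReal_re, Complex.ofReal_im,
      Complex.re_ofReal_mul, Complex.im_ofReal_mul, zero_sub] at hre him
    have hak2 : a * ((k:ℝ)/2) = Real.pi := by linarith
    have hsum : a * (x.re + y.re) = (2*(n:ℝ)+1)*Real.pi := by linarith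
    have hb1 : a * (x.re + y.re) ≤ a * ((k:ℝ)/2) :=
      mul_le_mul_of_nonneg_left (by linarith) ha.le
    have hb2 : -(a * ((k:ℝ)/2)) ≤ a * (x.re + y.re) := by
      have := mul_le_mul_of_nonneg_left (by linarith : -((k:ℝ)/2) ≤ x.re + y.re) ha.le
      linarith
    have hg1 : (-1:ℝ)*Real.pi ≤ (2*(n:ℝ)+1)*Real.pi := by linarith
    have hg2 : (2*(n:ℝ)+1)*Real.pi ≤ 1*Real.pi := by linarith
    have hi1 : (-1:ℝ) ≤ 2*(n:ℝ)+1 := le_of_mul_le_mul_right hg1 hπ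
    have hi2 : 2*(n:ℝ)+1 ≤ 1 := le_of_mul_le_mul_right hg2 hπ
    have hj1 : (-1:ℤ) ≤ 2*n+1 := by exact_mod_cast hi1
    have hj2 : (2*n+1:ℤ) ≤ 1 := by exact_mod_cast hi2
    have himeq : y.im = -x.im := by
      have := mul_left_cancel₀ ha.ne' (by linarith : a * y.im = a * (-x.im))
      linarith
    have hn01 : n = 0 ∨ n = -1 := by omega
    rcases hn01 with hn0 | hn1
    · subst hn0
      have hxy : x.re + y.re = (k:ℝ)/2 := by
        have h2 : a*(x.re+y.re) = Real.pi := by push_cast at hsum; linarith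
        exact mul_left_cancel₀ ha.ne' (h2.trans hak2.symm)
      have hxr : x.re = (k:ℝ)/4 := by linarith
      have hyr : y.re = (k:ℝ)/4 := by linarith
      have hxim : 0 ≤ x.im := by
        rcases hx with h | ⟨h,_⟩ | ⟨_,h⟩
        · rw [hxr, _root_.abs_of_nonneg hk4] at h; linarith
        · rw [hxr] at h; linarith
        · exact h
      have hyim : 0 ≤ y.im := by
        rcases hy with h | ⟨h,_⟩ | ⟨_,h⟩
        · rw [hyr, _root_.abs_of_nonneg hk4] at h; linarith
        · rw [hyr] at h; linarith
        · exact h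
      exact Complex.ext (by rw [hxr, hyr]) (by linarith)
    · subst hn1
      have hxy : x.re + y.re = -((k:ℝ)/2) := by
        have h2 : a*(x.re+y.re) = -Real.pi := by push_cast at hsum; linarith
        have h3 : a * (-((k:ℝ)/2)) = -Real.pi := by linear_combination -hak2
        exact mul_left_cancel₀ ha.ne' (h2.trans h3.symm)
      have hxr : x.re = -((k:ℝ)/4) := by linarith
      have hyr : y.re = -((k:ℝ)/4) := by linarith
      have hxim : x.im ≤ 0 := by
        rcases hx with h | ⟨_,h⟩ | ⟨h,_⟩
        · rw [hxr, abs_neg, _root_.abs_of_nonneg hk4] at h; linarith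
        · exact h
        · rw [hxr] at h; linarith
      have hyim : y.im ≤ 0 := by
        rcases hy with h | ⟨_,h⟩ | ⟨h,_⟩
        · rw [hyr, abs_neg, _root_.abs_of_nonneg hk4] at h; linarith
        · exact h
        · rw [hyr] at h; linarith
      exact Complex.ext (by rw [hxr, hyr]) (by linarith)
end

section
/- Let q = e^{2πi/k} with k odd, k ≥ 3, and define [x] := (e^{2πix/k} − e^{−2πix/k})/(q − q^{-1}) for x ∈ ℂ. For the set D^± = {x ∈ ℂ : 0 < Re x < k/4, or Re x = 0 and Im x ≥ 0, or Re x = k/4 and Im x ≥ 0}, if x, y ∈ D^± and x ≠ y then [x] ≠ [y] and [x] ≠ −[y]. -/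
open Complex


lemma aux_exp_one (k : ℕ) (hk : k ≠ 0) (z : ℂ)
    (h : Complex.exp (2 * Real.pi * Complex.I * z / k) = 1) :
    ∃ n : ℤ, z = (((n : ℝ) * (k : ℝ) : ℝ) : ℂ) := by
  rw [Complex.exp_eq_one_iff] at h
  obtain ⟨n, hn⟩ := h
  refine ⟨n, ?_⟩
  have hkC : (k : ℂ) ≠ 0 := Nat.cast_ne_zero.mpr hk
  have hpi : (Real.pi : ℂ) ≠ 0 := by exact_mod_cast Real.pi_ne_zero
  have h2 : (2 * (Real.pi : ℂ) * Complex.I) ≠ 0 := by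
    simp [hpi, Complex.I_ne_zero]
  field_simp at hn
  push_cast
  apply mul_left_cancel₀ h2
  linear_combination (2 * (Real.pi : ℂ) * Complex.I) * hn

lemma aux_exp_negone (k : ℕ) (hk : k ≠ 0) (z : ℂ)
    (h : Complex.exp (2 * Real.pi * Complex.I * z / k) = -1) :
    ∃ n : ℤ, z = (((k : ℝ) / 2 + (n : ℝ) * (k : ℝ) : ℝ) : ℂ) := by
  have h1 : Complex.exp (2 * Real.pi * Complex.I * z / k + Real.pi * Complex.I) = 1 := by
    rw [Complex.exp_add, h, Complex.exp_pi_mul_I]; ring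
  rw [Complex.exp_eq_one_iff] at h1
  obtain ⟨n, hn⟩ := h1
  refine ⟨n - 1, ?_⟩
  have hkC : (k : ℂ) ≠ 0 := Nat.cast_ne_zero.mpr hk
  have hpi : (Real.pi : ℂ) ≠ 0 := by exact_mod_cast Real.pi_ne_zero
  have h2 : (2 * (Real.pi : ℂ) * Complex.I) ≠ 0 := by
    simp [hpi, Complex.I_ne_zero]
  field_simp at hn
  push_cast
  apply mul_left_cancel₀ h2
  linear_combination ((Real.pi : ℂ) * Complex.I) * hn

lemma factor_eq (a b : ℂ) (ha : a ≠ 0) (hb : b ≠ 0) (h : a - a⁻¹ = b - b⁻¹) :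
    a = b ∨ a * b = -1 := by
  have h1 := mul_inv_cancel₀ ha
  have h2 := mul_inv_cancel₀ hb
  have key : (a - b) * (a * b + 1) = 0 := by
    linear_combination a * b * h + b * h1 - a * h2
  rcases mul_eq_zero.mp key with h' | h'
  · exact Or.inl (sub_eq_zero.mp h')
  · exact Or.inr (eq_neg_of_add_eq_zero_left h')

lemma factor_neg (a b : ℂ) (ha : a ≠ 0) (hb : b ≠ 0) (h : a - a⁻¹ = -(b - b⁻¹)) :
    a = -b ∨ a * b = 1 := by
  have h1 := mul_inv_cancel₀ ha
  have h2 := mul_inv_cancel₀ hb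
  have key : (a + b) * (a * b - 1) = 0 := by
    linear_combination a * b * h + b * h1 + a * h2
  rcases mul_eq_zero.mp key with h' | h'
  · exact Or.inl (eq_neg_of_add_eq_zero_left h')
  · exact Or.inr (sub_eq_zero.mp h')

lemma int_zero_of (k : ℝ) (hk : 0 < k) (n : ℤ) (h1 : -k < (n : ℝ) * k)
    (h2 : (n : ℝ) * k < k) : n = 0 := by
  by_contra h0
  rcases lt_or_gt_of_ne h0 with h | h
  · have hn1 : n ≤ -1 := by omega
    have : (n : ℝ) ≤ -1 := by exact_mod_cast hn1
    nlinarith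
  · have : (1 : ℝ) ≤ (n : ℝ) := by exact_mod_cast h
    nlinarith

lemma int_not_of (k : ℝ) (hk : 0 < k) (n : ℤ) (h1 : -k < (n : ℝ) * k)
    (h2 : (n : ℝ) * k < 0) : False := by
  rcases le_or_gt 0 n with h | h
  · have : (0 : ℝ) ≤ (n : ℝ) := by exact_mod_cast h
    nlinarith
  · have hn1 : n ≤ -1 := by omega
    have : (n : ℝ) ≤ -1 := by exact_mod_cast hn1
    nlinarith


/-- For k odd, k ≥ 3, q = e^{2πi/k}, and [x] := (e^{2πix/k} − e^{−2πix/k})/(q − q⁻¹):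
    for x ≠ y in the region D^± = {0 < Re x < k/4, or Re x = 0 and Im x ≥ 0,
    or Re x = k/4 and Im x ≥ 0} one has [x] ≠ [y] and [x] ≠ −[y]. -/
theorem qnum_ne_and_ne_neg_on_Dpm (k : ℕ) (hk : Odd k) (hk3 : 3 ≤ k)
    (x y : ℂ)
    (hx : (0 < x.re ∧ x.re < (k : ℝ) / 4) ∨ (x.re = 0 ∧ 0 ≤ x.im) ∨
      (x.re = (k : ℝ) / 4 ∧ 0 ≤ x.im))
    (hy : (0 < y.re ∧ y.re < (k : ℝ) / 4) ∨ (y.re = 0 ∧ 0 ≤ y.im) ∨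
      (y.re = (k : ℝ) / 4 ∧ 0 ≤ y.im))
    (hxy : x ≠ y) :
    (Complex.exp (2 * Real.pi * Complex.I * x / k) -
        Complex.exp (-(2 * Real.pi * Complex.I * x / k))) /
      (Complex.exp (2 * Real.pi * Complex.I / k) -
        (Complex.exp (2 * Real.pi * Complex.I / k))⁻¹) ≠
    (Complex.exp (2 * Real.pi * Complex.I * y / k) -
        Complex.exp (-(2 * Real.pi * Complex.I * y / k))) /
      (Complex.exp (2 * Real.pi * Complex.I / k) -
        (Complex.exp (2 * Real.pi * Complex.I / k))⁻¹) ∧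
    (Complex.exp (2 * Real.pi * Complex.I * x / k) -
        Complex.exp (-(2 * Real.pi * Complex.I * x / k))) /
      (Complex.exp (2 * Real.pi * Complex.I / k) -
        (Complex.exp (2 * Real.pi * Complex.I / k))⁻¹) ≠
    -((Complex.exp (2 * Real.pi * Complex.I * y / k) -
        Complex.exp (-(2 * Real.pi * Complex.I * y / k))) /
      (Complex.exp (2 * Real.pi * Complex.I / k) -
        (Complex.exp (2 * Real.pi * Complex.I / k))⁻¹)) := by
  have hk0 : k ≠ 0 := by omega
  have hk3R : (3 : ℝ) ≤ (k : ℝ) := by exact_mod_cast hk3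
  have kpos : (0 : ℝ) < (k : ℝ) := by linarith
  -- denominator nonzero
  have hd : Complex.exp (2 * Real.pi * Complex.I / k) -
      (Complex.exp (2 * Real.pi * Complex.I / k))⁻¹ ≠ 0 := by
    intro h
    have he := sub_eq_zero.mp h
    have h1 : Complex.exp (2 * Real.pi * Complex.I * (2 : ℂ) / k) = 1 := by
      rw [show (2 * (Real.pi : ℂ) * Complex.I * (2 : ℂ) / (k : ℂ)) =
        2 * Real.pi * Complex.I / k + 2 * Real.pi * Complex.I / k by ring, Complex.exp_add]
      nth_rewrite 2 [he]
      exact mul_inv_cancel₀ (Complex.exp_ne_zero _)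
    obtain ⟨n, hn⟩ := aux_exp_one k hk0 2 h1
    have hR : (2 : ℝ) = (n : ℝ) * (k : ℝ) := by exact_mod_cast hn
    rcases le_or_gt n 0 with h' | h'
    · have : (n : ℝ) ≤ 0 := by exact_mod_cast h'
      nlinarith
    · have : (1 : ℝ) ≤ (n : ℝ) := by exact_mod_cast h'
      nlinarith
  -- bounds on real parts
  have hxB : 0 ≤ x.re ∧ x.re ≤ (k : ℝ) / 4 := by
    rcases hx with ⟨h1, h2⟩ | ⟨h1, h2⟩ | ⟨h1, h2⟩
    · exact ⟨h1.le, h2.le⟩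
    · rw [h1]; exact ⟨le_refl _, by positivity⟩
    · rw [h1]; exact ⟨by positivity, le_refl _⟩
  have hyB : 0 ≤ y.re ∧ y.re ≤ (k : ℝ) / 4 := by
    rcases hy with ⟨h1, h2⟩ | ⟨h1, h2⟩ | ⟨h1, h2⟩
    · exact ⟨h1.le, h2.le⟩
    · rw [h1]; exact ⟨le_refl _, by positivity⟩
    · rw [h1]; exact ⟨by positivity, le_refl _⟩
  -- im nonneg helpers
  have hxim4 : x.re = (k : ℝ) / 4 → 0 ≤ x.im := by
    intro h4
    rcases hx with ⟨h1, h2⟩ | ⟨h1, h2⟩ | ⟨h1, h2⟩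
    · linarith
    · rw [h1] at h4; linarith
    · exact h2
  have hyim4 : y.re = (k : ℝ) / 4 → 0 ≤ y.im := by
    intro h4
    rcases hy with ⟨h1, h2⟩ | ⟨h1, h2⟩ | ⟨h1, h2⟩
    · linarith
    · rw [h1] at h4; linarith
    · exact h2
  have hxim0 : x.re = 0 → 0 ≤ x.im := by
    intro h4
    rcases hx with ⟨h1, h2⟩ | ⟨h1, h2⟩ | ⟨h1, h2⟩
    · linarith
    · exact h2
    · rw [h1] at h4; linarith
  have hyim0 : y.re = 0 → 0 ≤ y.im := by
    intro h4
    rcases hy with ⟨h1, h2⟩ | ⟨h1, h2⟩ | ⟨h1, h2⟩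
    · linarith
    · exact h2
    · rw [h1] at h4; linarith
  constructor
  · intro h
    have hN : Complex.exp (2 * Real.pi * Complex.I * x / k) -
        Complex.exp (-(2 * Real.pi * Complex.I * x / k)) =
        Complex.exp (2 * Real.pi * Complex.I * y / k) -
        Complex.exp (-(2 * Real.pi * Complex.I * y / k)) :=
      mul_right_cancel₀ hd ((div_eq_div_iff hd hd).mp h)
    rw [Complex.exp_neg, Complex.exp_neg] at hN
    rcases factor_eq _ _ (Complex.exp_ne_zero _) (Complex.exp_ne_zero _) hN with hc | hc
    · -- exp equal: x - y = n k
      have hE : Complex.exp (2 * Real.pi * Complex.I * (x - y) / k) = 1 := by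
        rw [show (2 * (Real.pi : ℂ) * Complex.I * (x - y) / (k : ℂ)) =
          2 * Real.pi * Complex.I * x / k + -(2 * Real.pi * Complex.I * y / k) by ring,
          Complex.exp_add, hc, Complex.exp_neg, mul_inv_cancel₀ (Complex.exp_ne_zero _)]
      obtain ⟨n, hn⟩ := aux_exp_one k hk0 _ hE
      have hre : x.re - y.re = (n : ℝ) * (k : ℝ) := by
        have := congrArg Complex.re hn; simpa using this
      have hn0 : n = 0 := int_zero_of (k : ℝ) kpos n (by linarith [hxB.1, hyB.2])
        (by linarith [hxB.2, hyB.1])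
      rw [hn0] at hn
      norm_num at hn
      exact hxy (sub_eq_zero.mp hn)
    · -- product = -1 : x + y = k/2 + n k
      have hE : Complex.exp (2 * Real.pi * Complex.I * (x + y) / k) = -1 := by
        rw [show (2 * (Real.pi : ℂ) * Complex.I * (x + y) / (k : ℂ)) =
          2 * Real.pi * Complex.I * x / k + 2 * Real.pi * Complex.I * y / k by ring,
          Complex.exp_add]
        exact hc
      obtain ⟨n, hn⟩ := aux_exp_negone k hk0 _ hE
      have hre : x.re + y.re = (k : ℝ) / 2 + (n : ℝ) * (k : ℝ) := by
        have := congrArg Complex.re hn; simpa using this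
      have him : x.im + y.im = 0 := by
        have := congrArg Complex.im hn; simpa using this
      have hn0 : n = 0 := int_zero_of (k : ℝ) kpos n (by linarith [hxB.1, hyB.1])
        (by linarith [hxB.2, hyB.2])
      rw [hn0] at hre
      norm_num at hre
      have hx4 : x.re = (k : ℝ) / 4 := by linarith [hxB.2, hyB.2]
      have hy4 : y.re = (k : ℝ) / 4 := by linarith [hxB.2, hyB.2]
      have h1 := hxim4 hx4
      have h2 := hyim4 hy4
      exact hxy (Complex.ext (by rw [hx4, hy4]) (by linarith))
  · intro h
    have h' : (Complex.exp (2 * Real.pi * Complex.I * x / k) -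
        Complex.exp (-(2 * Real.pi * Complex.I * x / k))) /
      (Complex.exp (2 * Real.pi * Complex.I / k) -
        (Complex.exp (2 * Real.pi * Complex.I / k))⁻¹) =
      (-(Complex.exp (2 * Real.pi * Complex.I * y / k) -
        Complex.exp (-(2 * Real.pi * Complex.I * y / k)))) /
      (Complex.exp (2 * Real.pi * Complex.I / k) -
        (Complex.exp (2 * Real.pi * Complex.I / k))⁻¹) := by
      rw [neg_div]; exact h
    have hN : Complex.exp (2 * Real.pi * Complex.I * x / k) -
        Complex.exp (-(2 * Real.pi * Complex.I * x / k)) =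
        -(Complex.exp (2 * Real.pi * Complex.I * y / k) -
        Complex.exp (-(2 * Real.pi * Complex.I * y / k))) :=
      mul_right_cancel₀ hd ((div_eq_div_iff hd hd).mp h')
    rw [Complex.exp_neg, Complex.exp_neg] at hN
    rcases factor_neg _ _ (Complex.exp_ne_zero _) (Complex.exp_ne_zero _) hN with hc | hc
    · -- exp(cx/k) = -exp(cy/k) : x - y = k/2 + n k, impossible
      have hE : Complex.exp (2 * Real.pi * Complex.I * (x - y) / k) = -1 := by
        rw [show (2 * (Real.pi : ℂ) * Complex.I * (x - y) / (k : ℂ)) =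
          2 * Real.pi * Complex.I * x / k + -(2 * Real.pi * Complex.I * y / k) by ring,
          Complex.exp_add, hc, Complex.exp_neg, neg_mul,
          mul_inv_cancel₀ (Complex.exp_ne_zero _)]
      obtain ⟨n, hn⟩ := aux_exp_negone k hk0 _ hE
      have hre : x.re - y.re = (k : ℝ) / 2 + (n : ℝ) * (k : ℝ) := by
        have := congrArg Complex.re hn; simpa using this
      exact absurd (int_not_of (k : ℝ) kpos n (by linarith [hxB.1, hyB.2])
        (by linarith [hxB.2, hyB.1])) not_false
    · -- product = 1 : x + y = n k
      have hE : Complex.exp (2 * Real.pi * Complex.I * (x + y) / k) = 1 := by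
        rw [show (2 * (Real.pi : ℂ) * Complex.I * (x + y) / (k : ℂ)) =
          2 * Real.pi * Complex.I * x / k + 2 * Real.pi * Complex.I * y / k by ring,
          Complex.exp_add]
        exact hc
      obtain ⟨n, hn⟩ := aux_exp_one k hk0 _ hE
      have hre : x.re + y.re = (n : ℝ) * (k : ℝ) := by
        have := congrArg Complex.re hn; simpa using this
      have him : x.im + y.im = 0 := by
        have := congrArg Complex.im hn; simpa using this
      have hn0 : n = 0 := int_zero_of (k : ℝ) kpos n (by linarith [hxB.1, hyB.1])
        (by linarith [hxB.2, hyB.2])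
      rw [hn0] at hre
      norm_num at hre
      have hx0 : x.re = 0 := by linarith [hxB.1, hyB.1]
      have hy0 : y.re = 0 := by linarith [hxB.1, hyB.1]
      have h1 := hxim0 hx0
      have h2 := hyim0 hy0
      exact hxy (Complex.ext (by rw [hx0, hy0]) (by linarith))
end
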